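/- Linearity of 0: for any Lineal term t, context Γ and Scalar type T, (1) if Γ ⊢ (0) t : T then T ≡ 0̄, and (2) if Γ ⊢ (t) 0 : T then T ≡ 0̄. -/

import Mathlib

set_option autoImplicit false

namespace Lineal

/-! ### Lineal terms -/

inductive Trm (S : Type) : Type where
  | var : ℕ → Trm S
  | lam : Trm S → Trm S
  | app : Trm S → Trm S → Trm S
  | zero : Trm S
  | smul : S → Trm S → Trm S
  | add : Trm S → Trm S → Trm S

namespace Trm

variable {S : Type}

/-- Basis terms: variables and abstractions. -/
def IsBasis : Trm S → Prop
  | var _ => True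
  | lam _ => True
  | _ => False

/-- de Bruijn shift by `d` of variables `≥ c`. -/
def shift (d : ℕ) : ℕ → Trm S → Trm S
  | c, var k => if k < c then var k else var (k + d)
  | c, lam t => lam (shift d (c + 1) t)
  | c, app t r => app (shift d c t) (shift d c r)
  | _, zero => zero
  | c, smul a t => smul a (shift d c t)
  | c, add t r => add (shift d c t) (shift d c r)

/-- Capture-avoiding substitution `t[s / j]` (de Bruijn). -/
def subst : Trm S → Trm S → ℕ → Trm S
  | var k, s, j => if k = j then s else if j < k then var (k - 1) else var k
  | lam t, s, j => lam (subst t (shift 1 0 s) (j + 1))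
  | app t r, s, j => app (subst t s j) (subst r s j)
  | zero, _, _ => zero
  | smul a t, s, j => smul a (subst t s j)
  | add t r, s, j => add (subst t s j) (subst r s j)

/-- All free variables are `< n`. -/
def ClosedUnder : ℕ → Trm S → Prop
  | n, var k => k < n
  | n, lam t => ClosedUnder (n + 1) t
  | n, app t r => ClosedUnder n t ∧ ClosedUnder n r
  | _, zero => True
  | n, smul _ t => ClosedUnder n t
  | n, add t r => ClosedUnder n t ∧ ClosedUnder n r

/-- Closed terms. -/
def Closed (t : Trm S) : Prop := ClosedUnder 0 t

def size : Trm S → ℕ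
  | var _ => 1
  | lam t => size t + 1
  | app t r => size t + size r + 1
  | zero => 1
  | smul _ t => size t + 1
  | add t r => size t + size r + 1

/-- `(t) r₁ … rₙ`. -/
def appList (t : Trm S) (l : List (Trm S)) : Trm S := l.foldl app t

/-- `t + u₁ + … + uₙ`. -/
def sumList (t : Trm S) (l : List (Trm S)) : Trm S := l.foldl add t

/-- Lifting of a simultaneous substitution under a binder. -/
def msubstLift (ρ : ℕ → Trm S) : ℕ → Trm S
  | 0 => var 0
  | n + 1 => shift 1 0 (ρ n)

/-- Simultaneous substitution of all free variables. -/
def msubst : (ℕ → Trm S) → Trm S → Trm S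
  | ρ, var k => ρ k
  | ρ, lam t => lam (msubst (msubstLift ρ) t)
  | ρ, app t r => app (msubst ρ t) (msubst ρ r)
  | _, zero => zero
  | ρ, smul a t => smul a (msubst ρ t)
  | ρ, add t r => add (msubst ρ t) (msubst ρ r)

end Trm

/-! ### AC equivalence of terms (`+` associative and commutative) -/

inductive ACeq {S : Type} : Trm S → Trm S → Prop
  | refl (t : Trm S) : ACeq t t
  | symm {t u : Trm S} : ACeq t u → ACeq u t
  | trans {t u v : Trm S} : ACeq t u → ACeq u v → ACeq t v
  | comm (t u : Trm S) : ACeq (Trm.add t u) (Trm.add u t)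
  | assoc (t u v : Trm S) : ACeq (Trm.add (Trm.add t u) v) (Trm.add t (Trm.add u v))
  | lamCong {t t' : Trm S} : ACeq t t' → ACeq (Trm.lam t) (Trm.lam t')
  | appCong {t t' r r' : Trm S} : ACeq t t' → ACeq r r' → ACeq (Trm.app t r) (Trm.app t' r')
  | smulCong (a : S) {t t' : Trm S} : ACeq t t' → ACeq (Trm.smul a t) (Trm.smul a t')
  | addCong {t t' r r' : Trm S} : ACeq t t' → ACeq r r' → ACeq (Trm.add t r) (Trm.add t' r')

/-! ### Reduction -/

/-- `t` is closed and normal (w.r.t. the step relation `St`). -/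
def ClosedNormal {S : Type} (St : Trm S → Trm S → Prop) (t : Trm S) : Prop :=
  t.Closed ∧ ∀ u, ¬ St t u

/-- Root rules and one-level contextual closure, parameterised by the step relation `St`
used on proper subterms (both for congruence and for the closed-normal side conditions). -/
inductive Core {S : Type} [CommRing S] (St : Trm S → Trm S → Prop) : Trm S → Trm S → Prop
  -- Elementary rules
  | addZero (t : Trm S) : Core St (Trm.add t Trm.zero) t
  | zeroSmul (t : Trm S) : Core St (Trm.smul 0 t) Trm.zero
  | oneSmul (t : Trm S) : Core St (Trm.smul 1 t) t
  | smulZero (a : S) : Core St (Trm.smul a Trm.zero) Trm.zero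
  | smulSmul (a b : S) (t : Trm S) : Core St (Trm.smul a (Trm.smul b t)) (Trm.smul (a * b) t)
  | smulAdd (a : S) (t r : Trm S) :
      Core St (Trm.smul a (Trm.add t r)) (Trm.add (Trm.smul a t) (Trm.smul a r))
  -- Factorisation rules (side condition : t closed normal)
  | fact1 (a b : S) (t : Trm S) : ClosedNormal St t →
      Core St (Trm.add (Trm.smul a t) (Trm.smul b t)) (Trm.smul (a + b) t)
  | fact2 (a : S) (t : Trm S) : ClosedNormal St t →
      Core St (Trm.add (Trm.smul a t) t) (Trm.smul (a + 1) t)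
  | fact3 (t : Trm S) : ClosedNormal St t →
      Core St (Trm.add t t) (Trm.smul (1 + 1) t)
  -- Application rules
  | appAddL (t r u : Trm S) : ClosedNormal St (Trm.add t r) →
      Core St (Trm.app (Trm.add t r) u) (Trm.add (Trm.app t u) (Trm.app r u))
  | appAddR (u t r : Trm S) : ClosedNormal St (Trm.add t r) →
      Core St (Trm.app u (Trm.add t r)) (Trm.add (Trm.app u t) (Trm.app u r))
  | appSmulL (a : S) (t r : Trm S) : ClosedNormal St t →
      Core St (Trm.app (Trm.smul a t) r) (Trm.smul a (Trm.app t r))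
  | appSmulR (a : S) (r t : Trm S) : ClosedNormal St t →
      Core St (Trm.app r (Trm.smul a t)) (Trm.smul a (Trm.app r t))
  | appZeroL (t : Trm S) : Core St (Trm.app Trm.zero t) Trm.zero
  | appZeroR (t : Trm S) : Core St (Trm.app t Trm.zero) Trm.zero
  -- Beta reduction (b a basis term)
  | beta (t b : Trm S) : Trm.IsBasis b → Core St (Trm.app (Trm.lam t) b) (Trm.subst t b 0)
  -- Contextual closure
  | lamCong {t t' : Trm S} : St t t' → Core St (Trm.lam t) (Trm.lam t')
  | appL {t t' : Trm S} (r : Trm S) : St t t' → Core St (Trm.app t r) (Trm.app t' r)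
  | appR (t : Trm S) {r r' : Trm S} : St r r' → Core St (Trm.app t r) (Trm.app t r')
  | smulCong (a : S) {t t' : Trm S} : St t t' → Core St (Trm.smul a t) (Trm.smul a t')
  | addL {t t' : Trm S} (r : Trm S) : St t t' → Core St (Trm.add t r) (Trm.add t' r)
  | addR (t : Trm S) {r r' : Trm S} : St r r' → Core St (Trm.add t r) (Trm.add t r')

/-- Stratified step relation: `StepN n` is the one-step reduction (modulo AC),
adequate for terms of size at most `n`. -/
def StepN {S : Type} [CommRing S] : ℕ → Trm S → Trm S → Prop
  | 0, _, _ => False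
  | n + 1, t, t' => ∃ u u', ACeq t u ∧ Core (StepN n) u u' ∧ ACeq u' t'

/-- One-step reduction of Lineal, on terms considered modulo AC of `+`. -/
def Step {S : Type} [CommRing S] (t t' : Trm S) : Prop := StepN t.size t t'

/-- Many-step reduction. -/
def RedStar {S : Type} [CommRing S] : Trm S → Trm S → Prop := Relation.ReflTransGen Step

/-- `t` is strongly normalising: every reduction sequence from `t` is finite. -/
def StronglyNormalising {S : Type} [CommRing S] (t : Trm S) : Prop :=
  Acc (fun a b => Step b a) t

/-- The set of strongly normalising terms. -/
def SNset (S : Type) [CommRing S] : Set (Trm S) := { t | StronglyNormalising t }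

end Lineal

namespace Lineal

/-! ### Scalar types -/

inductive STy (S : Type) : Type where
  | var : ℕ → STy S
  | arrow : STy S → STy S → STy S
  | all : STy S → STy S
  | smul : S → STy S → STy S
  | zero : STy S

namespace STy

mutual
  /-- Unit types: `U ::= X | U → T | ∀X.U`. -/
  inductive IsUnit {S : Type} : STy S → Prop
    | var (n : ℕ) : IsUnit (STy.var n)
    | arrow {U T : STy S} : IsUnit U → WF T → IsUnit (STy.arrow U T)
    | all {U : STy S} : IsUnit U → IsUnit (STy.all U)
  /-- Scalar types: `T ::= U | ∀X.T | α.T | 0̄`. -/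
  inductive WF {S : Type} : STy S → Prop
    | unit {U : STy S} : IsUnit U → WF U
    | all {T : STy S} : WF T → WF (STy.all T)
    | smul (a : S) {T : STy S} : WF T → WF (STy.smul a T)
    | zero : WF STy.zero
end

variable {S : Type}

/-- de Bruijn shift of type variables. -/
def shiftTV (d : ℕ) : ℕ → STy S → STy S
  | c, var k => if k < c then var k else var (k + d)
  | c, arrow A B => arrow (shiftTV d c A) (shiftTV d c B)
  | c, all T => all (shiftTV d (c + 1) T)
  | c, smul a T => smul a (shiftTV d c T)
  | _, zero => zero

/-- `T[U / j]`: capture-avoiding substitution for the type variable `j` (removing it). -/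
def substTV : STy S → STy S → ℕ → STy S
  | var k, U, j => if k = j then shiftTV j 0 U else if j < k then var (k - 1) else var k
  | arrow A B, U, j => arrow (substTV A U j) (substTV B U j)
  | all T, U, j => all (substTV T U (j + 1))
  | smul a T, U, j => smul a (substTV T U j)
  | zero, _, _ => zero

/-- Abstract the free type variable `n` of `T` (at depth `c`), so that
`all (closeTV T n 0)` is `∀X.T` where `X` is the free variable `n`. -/
def closeTV : STy S → ℕ → ℕ → STy S
  | var k, n, c => if k < c then var k else if k = n + c then var c else var (k + 1)
  | arrow A B, n, c => arrow (closeTV A n c) (closeTV B n c)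
  | all T, n, c => all (closeTV T n (c + 1))
  | smul a T, n, c => smul a (closeTV T n c)
  | zero, _, _ => zero

/-- `T[U / X]` for a *free* type variable named `n` (no binder is removed). -/
def substFreeAux : STy S → ℕ → STy S → ℕ → STy S
  | var k, n, U, c => if k = n + c then shiftTV c 0 U else var k
  | arrow A B, n, U, c => arrow (substFreeAux A n U c) (substFreeAux B n U c)
  | all T, n, U, c => all (substFreeAux T n U (c + 1))
  | smul a T, n, U, c => smul a (substFreeAux T n U c)
  | zero, _, _, _ => zero

def substFree (T : STy S) (n : ℕ) (U : STy S) : STy S := substFreeAux T n U 0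

/-- Free type variables. -/
def ftvAux : STy S → ℕ → Finset ℕ
  | var k, c => if k < c then ∅ else {k - c}
  | arrow A B, c => ftvAux A c ∪ ftvAux B c
  | all T, c => ftvAux T (c + 1)
  | smul _ T, c => ftvAux T c
  | zero, _ => ∅

def ftv (T : STy S) : Finset ℕ := ftvAux T 0

end STy

/-- Free type variables of a context. -/
def ftvCtx {S : Type} (Γ : List (STy S)) : Finset ℕ :=
  Γ.foldr (fun T s => T.ftv ∪ s) ∅

/-- Type equivalence `≡`: the least congruence with
`α.0̄ ≡ 0̄`, `0.T ≡ 0̄`, `1.T ≡ T`, `α.(β.T) ≡ (α×β).T`, `∀X.α.T ≡ α.∀X.T`. -/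
inductive SEq {S : Type} [CommRing S] : STy S → STy S → Prop
  | refl (T : STy S) : SEq T T
  | symm {T T' : STy S} : SEq T T' → SEq T' T
  | trans {T T' T'' : STy S} : SEq T T' → SEq T' T'' → SEq T T''
  | smulZero (a : S) : SEq (STy.smul a STy.zero) STy.zero
  | zeroSmul (T : STy S) : SEq (STy.smul 0 T) STy.zero
  | oneSmul (T : STy S) : SEq (STy.smul 1 T) T
  | smulSmul (a b : S) (T : STy S) : SEq (STy.smul a (STy.smul b T)) (STy.smul (a * b) T)
  | allSmul (a : S) (T : STy S) : SEq (STy.all (STy.smul a T)) (STy.smul a (STy.all T))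
  | arrowCong {U U' T T' : STy S} : SEq U U' → SEq T T' → SEq (STy.arrow U T) (STy.arrow U' T')
  | allCong {T T' : STy S} : SEq T T' → SEq (STy.all T) (STy.all T')
  | smulCong (a : S) {T T' : STy S} : SEq T T' → SEq (STy.smul a T) (STy.smul a T')

/-- `T ≺ R` iff either `R ≡ ∀X.T`, or `T ≡ ∀X.S` and `R ≡ S[U/X]` for some unit type `U`. -/
def Prec {S : Type} [CommRing S] (T R : STy S) : Prop :=
  (∃ n : ℕ, SEq R (STy.all (STy.closeTV T n 0))) ∨
  (∃ Sb U : STy S, STy.IsUnit U ∧ SEq T (STy.all Sb) ∧ SEq R (STy.substTV Sb U 0))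

/-- `⪯` : reflexive and transitive closure of `≺`. -/
def PrecEq {S : Type} [CommRing S] : STy S → STy S → Prop := Relation.ReflTransGen Prec

/-! ### The Scalar typing judgment -/

inductive Typ {S : Type} [CommRing S] : List (STy S) → Trm S → STy S → Prop
  | ax {Γ : List (STy S)} {n : ℕ} {U : STy S} : Γ[n]? = some U → Typ Γ (Trm.var n) U
  | equiv {Γ : List (STy S)} {t : Trm S} {T T' : STy S} : Typ Γ t T → SEq T T' → Typ Γ t T'
  | arrE {Γ : List (STy S)} {t r : Trm S} {U T : STy S} {a b : S} :
      Typ Γ t (STy.smul a (STy.arrow U T)) → Typ Γ r (STy.smul b U) →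
      Typ Γ (Trm.app t r) (STy.smul (a * b) T)
  | arrI {Γ : List (STy S)} {t : Trm S} {U T : STy S} :
      STy.IsUnit U → Typ (U :: Γ) t T → Typ Γ (Trm.lam t) (STy.arrow U T)
  | allE {Γ : List (STy S)} {t : Trm S} {T U : STy S} :
      Typ Γ t (STy.all T) → STy.IsUnit U → Typ Γ t (STy.substTV T U 0)
  | allI {Γ : List (STy S)} {t : Trm S} {T : STy S} :
      Typ (Γ.map (STy.shiftTV 1 0)) t T → Typ Γ t (STy.all T)
  | ax0 {Γ : List (STy S)} : Typ Γ Trm.zero STy.zero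
  | addI {Γ : List (STy S)} {t r : Trm S} {T : STy S} {a b : S} :
      Typ Γ t (STy.smul a T) → Typ Γ r (STy.smul b T) →
      Typ Γ (Trm.add t r) (STy.smul (a + b) T)
  | smulI {Γ : List (STy S)} {t : Trm S} {T : STy S} (a : S) :
      Typ Γ t T → Typ Γ (Trm.smul a t) (STy.smul a T)

/-! ### λ2^la -/

inductive FTy : Type where
  | var : ℕ → FTy
  | arrow : FTy → FTy → FTy
  | all : FTy → FTy

namespace FTy

def shiftTV (d : ℕ) : ℕ → FTy → FTy
  | c, var k => if k < c then var k else var (k + d)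
  | c, arrow A B => arrow (shiftTV d c A) (shiftTV d c B)
  | c, all A => all (shiftTV d (c + 1) A)

def substTV : FTy → FTy → ℕ → FTy
  | var k, B, j => if k = j then shiftTV j 0 B else if j < k then var (k - 1) else var k
  | arrow A C, B, j => arrow (substTV A B j) (substTV C B j)
  | all A, B, j => all (substTV A B (j + 1))

end FTy

/-- The typing judgment of λ2^la : System F rules over Lineal terms plus
`ax0`, `+I` and `sI`. -/
inductive FTyp {S : Type} [CommRing S] : List FTy → Trm S → FTy → Prop
  | ax {Γ : List FTy} {n : ℕ} {A : FTy} : Γ[n]? = some A → FTyp Γ (Trm.var n) A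
  | arrE {Γ : List FTy} {t r : Trm S} {A B : FTy} :
      FTyp Γ t (FTy.arrow A B) → FTyp Γ r A → FTyp Γ (Trm.app t r) B
  | arrI {Γ : List FTy} {t : Trm S} {A B : FTy} :
      FTyp (A :: Γ) t B → FTyp Γ (Trm.lam t) (FTy.arrow A B)
  | allE {Γ : List FTy} {t : Trm S} {A : FTy} (B : FTy) :
      FTyp Γ t (FTy.all A) → FTyp Γ t (FTy.substTV A B 0)
  | allI {Γ : List FTy} {t : Trm S} {A : FTy} :
      FTyp (Γ.map (FTy.shiftTV 1 0)) t A → FTyp Γ t (FTy.all A)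
  | ax0 {Γ : List FTy} (A : FTy) : FTyp Γ Trm.zero A
  | addI {Γ : List FTy} {t r : Trm S} {A : FTy} :
      FTyp Γ t A → FTyp Γ r A → FTyp Γ (Trm.add t r) A
  | smulI {Γ : List FTy} {t : Trm S} {A : FTy} (a : S) :
      FTyp Γ t A → FTyp Γ (Trm.smul a t) A

/-! ### Saturated sets and the interpretation of λ2^la types -/

/-- Saturated subsets of SN. -/
structure IsSaturated {S : Type} [CommRing S] (X : Set (Trm S)) : Prop where
  subset_sn : X ⊆ SNset S
  var_app : ∀ (n : ℕ) (l : List (Trm S)), (∀ u ∈ l, u ∈ SNset S) →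
      Trm.appList (Trm.var n) l ∈ X
  beta_exp : ∀ (v b : Trm S) (l : List (Trm S)), b.IsBasis →
      Trm.appList (Trm.subst v b 0) l ∈ X → Trm.appList (Trm.app (Trm.lam v) b) l ∈ X
  add_mem : ∀ {t u : Trm S}, t ∈ X → u ∈ X → Trm.add t u ∈ X
  smul_iff : ∀ (a : S) (t : Trm S), t ∈ X ↔ Trm.smul a t ∈ X
  sum_app : ∀ (u : Trm S) (us l : List (Trm S)),
      (∀ v ∈ u :: us, Trm.appList v l ∈ X) → Trm.appList (Trm.sumList u us) l ∈ X
  app_sum : ∀ (t v : Trm S) (vs l : List (Trm S)),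
      (∀ w ∈ v :: vs, Trm.appList (Trm.app t w) l ∈ X) →
      Trm.appList (Trm.app t (Trm.sumList v vs)) l ∈ X
  smul_head : ∀ (a : S) (t : Trm S) (l : List (Trm S)),
      Trm.smul a (Trm.appList t l) ∈ X ↔ Trm.appList (Trm.smul a t) l ∈ X
  smul_arg : ∀ (a : S) (t : Trm S) (l₁ : List (Trm S)) (u : Trm S) (l₂ : List (Trm S)),
      Trm.smul a (Trm.appList t (l₁ ++ u :: l₂)) ∈ X ↔
      Trm.appList t (l₁ ++ Trm.smul a u :: l₂) ∈ X
  zero_mem : Trm.zero ∈ X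
  zero_app : ∀ l : List (Trm S), (∀ u ∈ l, u ∈ SNset S) → Trm.appList Trm.zero l ∈ X
  app_zero : ∀ (t : Trm S) (l : List (Trm S)), t ∈ SNset S → (∀ u ∈ l, u ∈ SNset S) →
      Trm.appList (Trm.app t Trm.zero) l ∈ X

/-- Extension of a type-variable valuation (de Bruijn). -/
def consVal {S : Type} (Y : Set (Trm S)) (ξ : ℕ → Set (Trm S)) : ℕ → Set (Trm S)
  | 0 => Y
  | n + 1 => ξ n

/-- Interpretation `⟦A⟧_ξ` of a λ2^la type. -/
def FTy.interp {S : Type} [CommRing S] : FTy → (ℕ → Set (Trm S)) → Set (Trm S)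
  | FTy.var n, ξ => ξ n
  | FTy.arrow A B, ξ => { F | ∀ s ∈ interp A ξ, Trm.app F s ∈ interp B ξ }
  | FTy.all A, ξ => ⋂ Y ∈ { X : Set (Trm S) | IsSaturated X }, interp A (consVal Y ξ)

/-- `ρ, ξ ⊨ Γ`. -/
def SatCtx {S : Type} [CommRing S] (ρ : ℕ → Trm S) (ξ : ℕ → Set (Trm S))
    (Γ : List FTy) : Prop :=
  ∀ (n : ℕ) (A : FTy), Γ[n]? = some A → ρ n ∈ FTy.interp A ξ

/-- The `♮` map erasing scalars, sending `0̄` to a fixed λ2^la type `A`. -/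
def STy.flat {S : Type} (A : FTy) : STy S → FTy
  | STy.var n => FTy.var n
  | STy.arrow U T => FTy.arrow (flat A U) (flat A T)
  | STy.all T => FTy.all (flat A T)
  | STy.smul _ T => flat A T
  | STy.zero => A

end Lineal
namespace Lineal


/-!
Every scalar type `T` has a scalar factor, the product of the scalars in front of it (`0` for
`0̄`). It is invariant under `≡` and under instantiation by unit types, and `T ≡ 0̄` as soon as it
vanishes. All types of `0` have factor `0`, so a typing of `(0) t` ends with `→E` applied to a
function of type `α.(U → T)` with `α = 0`. For `(t) 0` the argument type `β.U` has factor
`β × scalar U = 0`, and `α × β = 0` follows from an invariant of derivations: arrow domains along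
the codomain spine of a derivable type have factor `1` unless a vanishing scalar stands in front
of them, because contexts and `→I` only introduce unit domains.
-/

open STy

section

variable {S : Type} [CommRing S]

namespace STy

def scalar : STy S → S
  | var _ => 1
  | arrow _ _ => 1
  | all T => scalar T
  | smul a T => a * scalar T
  | zero => 0

@[simp]
lemma scalar_shiftTV (d c : ℕ) (T : STy S) : scalar (shiftTV d c T) = scalar T := by
  induction T generalizing c with
  | var k => simp only [shiftTV]; split <;> rfl
  | arrow => rfl
  | all T ih => exact ih (c + 1)
  | smul a T ih => simp only [shiftTV, scalar, ih]
  | zero => rfl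

lemma IsUnit.scalar_eq_one {U : STy S} (hU : IsUnit U) : scalar U = 1 := by
  induction U with
  | all T ih => cases hU with | all hT => exact ih hT
  | smul | zero => cases hU
  | var | arrow => rfl

lemma scalar_substTV {U : STy S} (hU : IsUnit U) (T : STy S) (j : ℕ) :
    scalar (substTV T U j) = scalar T := by
  induction T generalizing j with
  | var k =>
    simp only [substTV]
    split
    · rw [scalar_shiftTV, hU.scalar_eq_one]; rfl
    · split <;> rfl
  | arrow => rfl
  | all T ih => exact ih (j + 1)
  | smul a T ih => simp only [substTV, scalar, ih]
  | zero => rfl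

end STy

lemma SEq.scalar_eq {T T' : STy S} (h : SEq T T') :
    scalar T = scalar T' := by
  induction h with
  | refl => rfl
  | symm _ ih => exact ih.symm
  | trans _ _ ih₁ ih₂ => exact ih₁.trans ih₂
  | smulSmul => simp only [scalar, mul_assoc]
  | smulCong a _ ih => simp only [scalar, ih]
  | allCong _ ih => exact ih
  | smulZero | zeroSmul | oneSmul | allSmul | arrowCong => simp [scalar]

lemma exists_seq_smul_scalar (T : STy S) :
    ∃ U : STy S, SEq T (STy.smul (scalar T) U) := by
  induction T with
  | var k => exact ⟨STy.var k, (SEq.oneSmul _).symm⟩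
  | arrow A B => exact ⟨STy.arrow A B, (SEq.oneSmul _).symm⟩
  | all T ih =>
    obtain ⟨U, hU⟩ := ih
    exact ⟨STy.all U, (SEq.allCong hU).trans (SEq.allSmul _ _)⟩
  | smul a T ih =>
    obtain ⟨U, hU⟩ := ih
    exact ⟨U, (SEq.smulCong a hU).trans (SEq.smulSmul _ _ _)⟩
  | zero => exact ⟨STy.zero, (SEq.zeroSmul _).symm⟩

lemma seq_zero_of_scalar_eq_zero {T : STy S} (h : scalar T = 0) :
    SEq T STy.zero := by
  obtain ⟨U, hU⟩ := exists_seq_smul_scalar T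
  rw [h] at hU
  exact hU.trans (SEq.zeroSmul U)

namespace STy

/-- The part of well-formedness that survives `≡`: the domain of each arrow along the codomain
spine has factor `1`, unless a scalar in front of it kills the whole type. -/
def UnitDomains : STy S → Prop
  | var _ => True
  | arrow U T => scalar U = 1 ∧ UnitDomains T
  | all T => UnitDomains T
  | smul a T => a * scalar T = 0 ∨ UnitDomains T
  | zero => True

lemma unitDomains_of_scalar_eq_zero {T : STy S} (h : scalar T = 0) : UnitDomains T := by
  induction T with
  | arrow _ _ _ ihT =>
    have : Subsingleton S := subsingleton_of_zero_eq_one h.symm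
    exact ⟨Subsingleton.elim _ _, ihT (Subsingleton.elim _ _)⟩
  | all T ih => exact ih h
  | smul => exact Or.inl h
  | var | zero => trivial

lemma WF.unitDomains {T : STy S} (hT : WF T) : UnitDomains T := by
  induction T with
  | arrow U T _ ihT =>
    cases hT with
    | unit hU => cases hU with | arrow hU hT => exact ⟨hU.scalar_eq_one, ihT hT⟩
  | all T ih =>
    cases hT with
    | unit hU => cases hU with | all hT => exact ih (WF.unit hT)
    | all hT => exact ih hT
  | smul a T ih =>
    cases hT with
    | unit hU => cases hU
    | smul _ hT => exact Or.inr (ih hT)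
  | var | zero => trivial

lemma IsUnit.unitDomains {U : STy S} (hU : IsUnit U) : UnitDomains U :=
  (WF.unit hU).unitDomains

@[simp]
lemma unitDomains_shiftTV (d c : ℕ) (T : STy S) :
    UnitDomains (shiftTV d c T) ↔ UnitDomains T := by
  induction T generalizing c with
  | var k => simp only [shiftTV]; split <;> rfl
  | arrow U T _ ihT => simp only [shiftTV, UnitDomains, scalar_shiftTV, ihT]
  | all T ih => exact ih (c + 1)
  | smul a T ih => simp only [shiftTV, UnitDomains, scalar_shiftTV, ih]
  | zero => rfl

lemma UnitDomains.substTV {T U : STy S} (hT : UnitDomains T) (hU : IsUnit U) (j : ℕ) :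
    UnitDomains (substTV T U j) := by
  induction T generalizing j with
  | var k =>
    simp only [STy.substTV]
    split
    · exact (unitDomains_shiftTV _ _ _).2 hU.unitDomains
    · split <;> trivial
  | arrow A T _ ihT => exact ⟨(scalar_substTV hU A j).trans hT.1, ihT hT.2 j⟩
  | all T ih => exact ih hT (j + 1)
  | smul a T ih =>
    simp only [STy.substTV, UnitDomains, scalar_substTV hU]
    exact hT.imp_right (ih · j)
  | zero => trivial

end STy

lemma SEq.unitDomains_iff {T T' : STy S} (h : SEq T T') :
    UnitDomains T ↔ UnitDomains T' := by
  induction h with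
  | refl => rfl
  | symm _ ih => exact ih.symm
  | trans _ _ ih₁ ih₂ => exact ih₁.trans ih₂
  | smulZero | zeroSmul => simp [UnitDomains, scalar]
  | oneSmul T =>
    simp only [UnitDomains, one_mul, or_iff_right_iff_imp]
    exact unitDomains_of_scalar_eq_zero
  | smulSmul a b T =>
    simp only [UnitDomains, scalar, ← mul_assoc]
    exact ⟨fun h => h.elim Or.inl (Or.imp_left fun h => by rw [mul_assoc, h, mul_zero]),
      fun h => h.elim Or.inl (Or.inr ∘ Or.inr)⟩
  | allSmul => rfl
  | arrowCong hU _ _ ihT => simp only [UnitDomains, hU.scalar_eq, ihT]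
  | allCong _ ih => exact ih
  | smulCong a h ih => simp only [UnitDomains, h.scalar_eq, ih]

namespace Typ

lemma unitDomains {Γ : List (STy S)} {s : Trm S} {T : STy S} (h : Typ Γ s T)
    (hΓ : ∀ U ∈ Γ, UnitDomains U) : UnitDomains T := by
  induction h with
  | ax hget => exact hΓ _ (List.mem_of_getElem? hget)
  | equiv _ hT ih => exact hT.unitDomains_iff.1 (ih hΓ)
  | arrE _ _ ih _ =>
    rcases ih hΓ with ha | ⟨-, hT⟩
    · rw [scalar, mul_one] at ha
      exact Or.inl (by rw [ha, zero_mul, zero_mul])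
    · exact Or.inr hT
  | arrI hU _ ih =>
    refine ⟨hU.scalar_eq_one, ih ?_⟩
    rintro V (_ | ⟨_, hV⟩)
    exacts [hU.unitDomains, hΓ V hV]
  | @allE _ _ T _ _ hU ih => exact UnitDomains.substTV (T := T) (ih hΓ) hU 0
  | allI _ ih =>
    refine ih ?_
    simpa only [List.forall_mem_map, unitDomains_shiftTV] using hΓ
  | ax0 => trivial
  | addI _ _ iht ihr =>
    rcases iht hΓ with ha | hT
    · rcases ihr hΓ with hb | hT
      · exact Or.inl (by rw [add_mul, ha, hb, add_zero])
      · exact Or.inr hT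
    · exact Or.inr hT
  | smulI _ _ ih => exact Or.inr (ih hΓ)

lemma scalar_eq_zero_of_zero {Γ : List (STy S)} {T : STy S} (h : Typ Γ Trm.zero T) :
    scalar T = 0 := by
  generalize hs : (Trm.zero : Trm S) = s at h
  induction h with
  | equiv _ hT ih => exact hT.scalar_eq ▸ ih hs
  | allE _ hU ih => exact (scalar_substTV hU _ 0).trans (ih hs)
  | allI _ ih => exact ih hs
  | ax0 => rfl
  | ax | arrE | arrI | addI | smulI => cases hs

/-- Up to `∀` and `≡`, a typing of an application is an instance of `→E`. -/
lemma scalar_eq_zero_of_app {Γ : List (STy S)} {t r : Trm S} {T : STy S}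
    (h : Typ Γ (Trm.app t r) T) (hΓ : ∀ U ∈ Γ, UnitDomains U)
    (harr : ∀ (Δ : List (STy S)) (a b : S) (U V : STy S), (∀ W ∈ Δ, UnitDomains W) →
      Typ Δ t (STy.smul a (STy.arrow U V)) → Typ Δ r (STy.smul b U) → a * b = 0) :
    scalar T = 0 := by
  generalize hs : Trm.app t r = s at h
  induction h with
  | equiv _ hT ih => exact hT.scalar_eq ▸ ih hΓ hs
  | @arrE Δ _ _ U V a b ht hr _ _ =>
    cases hs
    simp only [scalar, harr Δ a b U V hΓ ht hr, zero_mul]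
  | allE _ hU ih => exact (scalar_substTV hU _ 0).trans (ih hΓ hs)
  | allI _ ih =>
    refine ih ?_ hs
    simpa only [List.forall_mem_map, unitDomains_shiftTV] using hΓ
  | ax | arrI | ax0 | addI | smulI => cases hs

lemma scalar_eq_zero_of_zero_app {Γ : List (STy S)} {t : Trm S} {T : STy S}
    (h : Typ Γ (Trm.app Trm.zero t) T) (hΓ : ∀ U ∈ Γ, UnitDomains U) : scalar T = 0 :=
  h.scalar_eq_zero_of_app hΓ fun _ a _ _ _ _ ht _ => by
    have ha : a * 1 = 0 := ht.scalar_eq_zero_of_zero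
    rw [mul_one] at ha
    rw [ha, zero_mul]

lemma scalar_eq_zero_of_app_zero {Γ : List (STy S)} {t : Trm S} {T : STy S}
    (h : Typ Γ (Trm.app t Trm.zero) T) (hΓ : ∀ U ∈ Γ, UnitDomains U) : scalar T = 0 := by
  refine h.scalar_eq_zero_of_app hΓ fun Δ a b U V hΔ ht hr => ?_
  have hbU : b * scalar U = 0 := hr.scalar_eq_zero_of_zero
  rcases ht.unitDomains hΔ with ha | ⟨hU, -⟩
  · rw [scalar, mul_one] at ha
    rw [ha, zero_mul]
  · rw [hU, mul_one] at hbU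
    rw [hbU, mul_zero]

end Typ

end

/-- **Linearity of `0`.**
(1) If `Γ ⊢ (0) t : T` then `T ≡ 0̄`; (2) if `Γ ⊢ (t) 0 : T` then `T ≡ 0̄`. -/
theorem linearity_of_zero {S : Type} [CommRing S] (t : Trm S)
    (Γ : List (STy S)) (T : STy S)
    (hΓ : ∀ U ∈ Γ, STy.IsUnit U) (hT : STy.WF T) :
    (Typ Γ (Trm.app Trm.zero t) T → SEq T STy.zero) ∧
    (Typ Γ (Trm.app t Trm.zero) T → SEq T STy.zero) := by
  have hΓ' : ∀ U ∈ Γ, UnitDomains U := fun U hU => (hΓ U hU).unitDomains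
  exact ⟨fun h => seq_zero_of_scalar_eq_zero (h.scalar_eq_zero_of_zero_app hΓ'),
    fun h => seq_zero_of_scalar_eq_zero (h.scalar_eq_zero_of_app_zero hΓ')⟩

end Lineal
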